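/- arXiv:2505.24546 — 6 statements merged into one kernel-verified Lean document; each statement's English description precedes it below -/
import Mathlib

section
/- Let f be a real polynomial of degree K > 1 with positive leading coefficient such that all complex roots of f' are real, listed with multiplicity as β_{K−1} ≤ ... ≤ β_1. Then all complex roots of f are real if and only if f(β_i) ≤ 0 for every odd i with 1 ≤ i ≤ K−1 and f(β_i) ≥ 0 for every even i with 1 ≤ i ≤ K−1. -/
/-!
Counted with multiplicity, the real roots of `f` number `#{i | f(β_i) = 0}` plus the number of
distinct real roots, because a root of `f` of multiplicity `m` is a root of `f'` of multiplicity
`m - 1`.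

If the sign conditions hold, the values of `f` at `+∞, β_1, …, β_{K-1}, -∞` weakly alternate in
sign. So each of these values that is nonzero, except the last, forces a zero of `f` strictly below
its point and at or above the next one. This gives `#{i | f(β_i) ≠ 0} + 1` distinct real roots,
hence `K` roots in all.

Conversely, let `f` split over `ℝ` and `f(β_i) ≠ 0`. Rolle's theorem, applied on each side of
`β_i`, allows at most `i` roots of `f` above `β_i` and at most `K - i` below it. Since there are
`K` roots in all, exactly `i` of them lie above `β_i`, and this is what fixes the sign of `f(β_i)`.
-/

open Polynomial Set Filter

section NegOnePow

variable {R : Type*} [CommRing R] [LinearOrder R] [IsStrictOrderedRing R]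

theorem mul_nonpos_of_neg_one_pow_mul_nonneg {a b : R} {k : ℕ} (ha : 0 ≤ (-1) ^ k * a)
    (hb : 0 ≤ (-1) ^ (k + 1) * b) : a * b ≤ 0 := by
  have e : (-1) ^ k * a * ((-1) ^ (k + 1) * b) = -(a * b) := by
    rw [pow_succ]
    ring_nf
    simp
  exact neg_nonneg.1 (e ▸ mul_nonneg ha hb)

theorem odd_imp_nonpos_and_even_imp_nonneg_iff {a : R} {k : ℕ} :
    ((Odd k → a ≤ 0) ∧ (Even k → 0 ≤ a)) ↔ 0 ≤ (-1) ^ k * a := by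
  rcases Nat.even_or_odd k with h | h
  · simp [h, h.neg_one_pow, Nat.not_odd_iff_even.2 h]
  · simp [h, h.neg_one_pow, Nat.not_even_iff_odd.2 h]

end NegOnePow

theorem Multiset.card_filter_coe_ofFn {α : Type*} {n : ℕ} (β : Fin n → α) (p : α → Prop)
    [DecidablePred p] :
    Multiset.card (Multiset.filter p ↑(List.ofFn β)) =
      (Finset.univ.filter fun j => p (β j)).card := by
  rw [← Fin.univ_val_map, Multiset.filter_map, Multiset.card_map]
  rfl

section SignChanges

variable {g : ℝ → ℝ}

theorem exists_mem_Ioc_eq_zero_of_mul_nonpos {x y : ℝ} (hg : ContinuousOn g (Icc y x))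
    (hyx : y ≤ x) (hy : g y ≠ 0) (h : g y * g x ≤ 0) : ∃ z ∈ Ioc y x, g z = 0 := by
  have h0 : (0 : ℝ) ∈ uIcc (g y) (g x) := by
    rw [mem_uIcc]
    rcases mul_nonpos_iff.1 h with h | h
    · exact Or.inr h.symm
    · exact Or.inl h
  rw [← uIcc_of_le hyx] at hg
  obtain ⟨z, hz, hz0⟩ := intermediate_value_uIcc hg h0
  rw [uIcc_of_le hyx] at hz
  exact ⟨z, ⟨hz.1.lt_of_ne (by rintro rfl; exact hy hz0), hz.2⟩, hz0⟩

theorem countP_ne_zero_le_card_filter_le_of_isChain (hg : Continuous g) {Z : Finset ℝ}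
    (hZ : ∀ z, g z = 0 → z ∈ Z) {x : ℝ} {l : List ℝ}
    (hl : (x :: l).IsChain fun a b => b ≤ a ∧ g a * g b ≤ 0) :
    l.countP (fun a => g a ≠ 0) ≤ (Z.filter (· ≤ x)).card := by
  induction l generalizing x with
  | nil => simp
  | cons y l ih =>
    obtain ⟨⟨hyx, hsign⟩, hl⟩ := List.isChain_cons_cons.1 hl
    have hsub : Z.filter (· ≤ y) ⊆ Z.filter (· ≤ x) := fun z hz => by
      rw [Finset.mem_filter] at hz ⊢
      exact ⟨hz.1, hz.2.trans hyx⟩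
    rw [List.countP_cons]
    by_cases hy : g y = 0
    · simpa [hy] using (ih hl).trans (Finset.card_le_card hsub)
    · obtain ⟨z, hz, hz0⟩ := exists_mem_Ioc_eq_zero_of_mul_nonpos hg.continuousOn hyx hy
        ((mul_comm _ _).trans_le hsign)
      have hlt : (Z.filter (· ≤ y)).card < (Z.filter (· ≤ x)).card := by
        refine Finset.card_lt_card ((Finset.ssubset_iff_of_subset hsub).2 ⟨z, ?_, ?_⟩)
        · exact Finset.mem_filter.2 ⟨hZ z hz0, hz.2⟩
        · rw [Finset.mem_filter, not_and, not_le]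
          exact fun _ => hz.1
      simpa [hy] using (Nat.add_le_add_right (ih hl) 1).trans hlt

theorem isChain_cons_ofFn_append_singleton {n : ℕ} (hn : 0 < n) {β : Fin n → ℝ}
    (hanti : Antitone β) (hsign : ∀ i : Fin n, 0 ≤ (-1) ^ (i.1 + 1) * g (β i)) {M b : ℝ}
    (hM : 0 ≤ g M) (hMβ : ∀ i, β i ≤ M) (hb : 0 ≤ (-1) ^ (n + 1) * g b) (hbβ : ∀ i, b ≤ β i) :
    (M :: (List.ofFn β ++ [b])).IsChain fun x y => y ≤ x ∧ g x * g y ≤ 0 := by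
  rw [List.isChain_cons, List.isChain_append, List.isChain_ofFn]
  refine ⟨?_, fun j hj => ⟨hanti (Fin.mk_le_mk.2 j.le_succ), ?_⟩, List.isChain_singleton b, ?_⟩
  · intro y hy
    obtain rfl : y = β ⟨0, hn⟩ := by simpa [List.head?_eq_getElem?, hn, eq_comm] using hy
    exact ⟨hMβ _, mul_nonpos_of_neg_one_pow_mul_nonneg (k := 0) (by simpa using hM) (hsign ⟨0, hn⟩)⟩
  · exact mul_nonpos_of_neg_one_pow_mul_nonneg (hsign _) (hsign ⟨j + 1, hj⟩)
  · intro x hx y hy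
    have hlast : n - 1 < n := by omega
    obtain rfl : x = β ⟨_, hlast⟩ := by
      simpa [List.getLast?_eq_getElem?, hlast, eq_comm] using hx
    obtain rfl : y = b := by simpa [eq_comm] using hy
    refine ⟨hbβ _, mul_nonpos_of_neg_one_pow_mul_nonneg (hsign ⟨_, hlast⟩) ?_⟩
    rwa [show n - 1 + 1 + 1 = n + 1 by omega]

end SignChanges

namespace Polynomial

theorem splits_iff_forall_aeval_eq_zero_im_eq_zero {f : ℝ[X]} (hf : f ≠ 0) :
    f.Splits ↔ ∀ z : ℂ, aeval z f = 0 → z.im = 0 := by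
  have hinj : Function.Injective (algebraMap ℝ ℂ) := (algebraMap ℝ ℂ).injective
  have hmem : ∀ z : ℂ, z ∈ (f.map (algebraMap ℝ ℂ)).roots ↔ aeval z f = 0 := fun z => by
    rw [mem_roots ((Polynomial.map_ne_zero_iff hinj).2 hf), IsRoot, eval_map_algebraMap]
  constructor
  · intro hsplit z hz
    rw [← hmem, hsplit.roots_map_of_injective hinj] at hz
    obtain ⟨a, -, rfl⟩ := Multiset.mem_map.1 hz
    exact Complex.ofReal_im a
  · intro hreal
    refine Splits.of_splits_map_of_injective hinj (IsAlgClosed.splits _) fun z hz => ?_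
    exact ⟨z.re, Complex.ext rfl (hreal z ((hmem z).1 hz)).symm⟩

theorem card_filter_roots_eq_card_filter_roots_derivative_add_card_toFinset {R : Type*}
    [CommRing R] [IsDomain R] [CharZero R] [DecidableEq R] {p : R[X]} (hp : p ≠ 0)
    (q : R → Prop) [DecidablePred q] :
    Multiset.card (p.roots.filter q) =
      Multiset.card (((derivative p).roots.filter q).filter p.IsRoot) +
        (p.roots.filter q).toFinset.card := by
  have hcount : ∀ a ∈ (p.roots.filter q).toFinset, (p.roots.filter q).count a =
      (((derivative p).roots.filter q).filter p.IsRoot).count a + 1 := by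
    intro a ha
    obtain ⟨hroot, hqa⟩ := Multiset.mem_filter.1 (Multiset.mem_toFinset.1 ha)
    rw [mem_roots hp] at hroot
    rw [Multiset.count_filter_of_pos hqa, Multiset.count_filter_of_pos hroot,
      Multiset.count_filter_of_pos hqa, count_roots, count_roots,
      derivative_rootMultiplicity_of_root hroot,
      Nat.sub_add_cancel ((rootMultiplicity_pos hp).2 hroot)]
  rw [← Multiset.toFinset_sum_count_eq, Finset.sum_congr rfl hcount, Finset.sum_add_distrib,
    Finset.card_eq_sum_ones, Multiset.sum_count_eq_card]
  intro a ha
  simp only [Multiset.mem_filter] at ha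
  exact Multiset.mem_toFinset.2 (Multiset.mem_filter.2 ⟨(mem_roots hp).2 ha.2, ha.1.2⟩)

theorem card_filter_roots_le_card_filter_roots_derivative_add_one (p : ℝ[X]) (q : ℝ → Prop)
    [DecidablePred q] (hq : {x | q x}.OrdConnected) :
    Multiset.card (p.roots.filter q) ≤ Multiset.card ((derivative p).roots.filter q) + 1 := by
  rcases eq_or_ne (derivative p) 0 with hp' | hp'
  · rw [eq_C_of_derivative_eq_zero hp', roots_C]
    simp
  have hp : p ≠ 0 := ne_of_apply_ne derivative (by rwa [derivative_zero])
  set D := (derivative p).roots.filter q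
  have hdistinct : (p.roots.filter q).toFinset.card ≤
      Multiset.card (D.filter fun z => ¬p.IsRoot z) + 1 := by
    refine (Finset.card_le_sdiff_of_interleaved
      (t := (D.filter fun z => ¬p.IsRoot z).toFinset) fun x hx y hy hxy hgap => ?_).trans
      (by grw [Finset.sdiff_subset, Multiset.toFinset_card_le])
    simp only [Multiset.mem_toFinset, Multiset.mem_filter, mem_roots hp] at hx hy
    obtain ⟨z, hz, hz'⟩ := exists_deriv_eq_zero hxy p.continuousOn (hx.1.trans hy.1.symm)
    have hqz : q z := hq.out hx.2 hy.2 (Ioo_subset_Icc_self hz)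
    have hpz : ¬p.IsRoot z := fun hpz => hgap z
      (Multiset.mem_toFinset.2 (Multiset.mem_filter.2 ⟨(mem_roots hp).2 hpz, hqz⟩)) hz
    refine ⟨z, Multiset.mem_toFinset.2 (Multiset.mem_filter.2
      ⟨Multiset.mem_filter.2 ⟨(mem_roots hp').2 ?_, hqz⟩, hpz⟩), hz⟩
    rwa [IsRoot, ← p.deriv]
  calc Multiset.card (p.roots.filter q)
      = Multiset.card (D.filter p.IsRoot) + (p.roots.filter q).toFinset.card :=
        card_filter_roots_eq_card_filter_roots_derivative_add_card_toFinset hp q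
    _ ≤ Multiset.card (D.filter p.IsRoot) + (Multiset.card (D.filter fun z => ¬p.IsRoot z) + 1) :=
        by gcongr
    _ = Multiset.card D + 1 := by rw [← add_assoc, ← Multiset.card_add, Multiset.filter_add_not]

theorem neg_one_pow_card_filter_roots_gt_mul_eval_pos {f : ℝ[X]}
    (hsplit : Multiset.card f.roots = f.natDegree) (hl : 0 < f.leadingCoeff) {x : ℝ}
    (hx : ¬f.IsRoot x) : 0 < (-1) ^ Multiset.card (f.roots.filter (x < ·)) * f.eval x := by
  set A := f.roots.filter (x < ·)
  set B := f.roots.filter fun r => ¬x < r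
  have hf : f ≠ 0 := leadingCoeff_ne_zero.1 hl.ne'
  have heval : f.eval x = f.leadingCoeff * ((A.map (x - ·)).prod * (B.map (x - ·)).prod) := by
    conv_lhs => rw [← C_leadingCoeff_mul_prod_multiset_X_sub_C hsplit]
    rw [← Multiset.prod_add, ← Multiset.map_add, Multiset.filter_add_not]
    simp [eval_multiset_prod]
  have hA : (-1) ^ Multiset.card A * (A.map (x - ·)).prod = (A.map (· - x)).prod := by
    rw [← Multiset.card_map (x - ·), ← Multiset.prod_map_neg, Multiset.map_map]
    simp
  have hApos : 0 < (A.map (· - x)).prod := Multiset.prod_pos fun _ h => by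
    obtain ⟨r, hr, rfl⟩ := Multiset.mem_map.1 h
    exact sub_pos.2 (Multiset.mem_filter.1 hr).2
  have hBpos : 0 < (B.map (x - ·)).prod := Multiset.prod_pos fun _ h => by
    obtain ⟨r, hr, rfl⟩ := Multiset.mem_map.1 h
    obtain ⟨hroot, hle⟩ := Multiset.mem_filter.1 hr
    have hrx : r ≠ x := fun h => hx (h ▸ (mem_roots hf).1 hroot)
    exact sub_pos.2 ((not_lt.1 hle).lt_of_ne hrx)
  calc 0 < f.leadingCoeff * (A.map (· - x)).prod * (B.map (x - ·)).prod := by positivity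
    _ = _ := by rw [heval, ← hA]; ring

theorem tendsto_neg_one_pow_natDegree_mul_eval_atBot {f : ℝ[X]} (hdeg : 0 < f.natDegree)
    (hl : 0 < f.leadingCoeff) :
    Tendsto (fun x => (-1) ^ f.natDegree * f.eval x) atBot atTop := by
  set p := C ((-1) ^ f.natDegree) * f.comp (-X)
  have hp : p.natDegree = f.natDegree := by
    rw [natDegree_C_mul (by simp), natDegree_comp]
    simp
  have hlp : p.leadingCoeff = f.leadingCoeff := by
    rw [leadingCoeff_mul, leadingCoeff_C, leadingCoeff_comp (by simp)]
    simp only [leadingCoeff_neg, leadingCoeff_X]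
    rw [mul_left_comm, ← pow_add, Even.neg_one_pow ⟨_, rfl⟩, mul_one]
  have := (p.tendsto_atTop_of_leadingCoeff_nonneg (natDegree_pos_iff_degree_pos.1 (hp ▸ hdeg))
    (hlp ▸ hl.le)).comp tendsto_neg_atBot_atTop
  refine this.congr fun x => ?_
  simp [p]

theorem neg_one_pow_mul_eval_nonneg_of_card_roots_eq {f : ℝ[X]}
    (hsplit : Multiset.card f.roots = f.natDegree) (hl : 0 < f.leadingCoeff)
    {β : Fin (f.natDegree - 1) → ℝ} (hanti : Antitone β)
    (hroots : (derivative f).roots = ↑(List.ofFn β)) (i : Fin (f.natDegree - 1)) :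
    0 ≤ (-1) ^ (i.1 + 1) * f.eval (β i) := by
  by_cases hx : f.IsRoot (β i)
  · simp [hx.eq_zero]
  suffices Multiset.card (f.roots.filter (β i < ·)) = i + 1 from
    (this ▸ neg_one_pow_card_filter_roots_gt_mul_eval_pos hsplit hl hx).le
  have hf : f ≠ 0 := leadingCoeff_ne_zero.1 hl.ne'
  have habove : Multiset.card (f.roots.filter (β i < ·)) ≤ i + 1 :=
    calc _ ≤ Multiset.card ((derivative f).roots.filter (β i < ·)) + 1 :=
          card_filter_roots_le_card_filter_roots_derivative_add_one f _ ordConnected_Ioi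
      _ = (Finset.univ.filter fun j => β i < β j).card + 1 := by
          rw [hroots, Multiset.card_filter_coe_ofFn]
      _ ≤ (Finset.Iio i).card + 1 := by
          gcongr
          exact fun j hj => Finset.mem_Iio.2 (hanti.reflect_lt (Finset.mem_filter.1 hj).2)
      _ = i + 1 := by rw [Fin.card_Iio]
  have hbelow : Multiset.card (f.roots.filter (· < β i)) ≤ f.natDegree - 1 - 1 - i + 1 :=
    calc _ ≤ Multiset.card ((derivative f).roots.filter (· < β i)) + 1 :=
          card_filter_roots_le_card_filter_roots_derivative_add_one f _ ordConnected_Iio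
      _ = (Finset.univ.filter fun j => β j < β i).card + 1 := by
          rw [hroots, Multiset.card_filter_coe_ofFn]
      _ ≤ (Finset.Ioi i).card + 1 := by
          gcongr
          exact fun j hj => Finset.mem_Ioi.2 (hanti.reflect_lt (Finset.mem_filter.1 hj).2)
      _ = f.natDegree - 1 - 1 - i + 1 := by rw [Fin.card_Ioi]
  have hsum : Multiset.card (f.roots.filter (β i < ·)) +
      Multiset.card (f.roots.filter (· < β i)) = f.natDegree := by
    rw [← hsplit, ← Multiset.card_add]
    conv_rhs => rw [← Multiset.filter_add_not (β i < ·) f.roots]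
    congr 2
    refine Multiset.filter_congr fun r hr => ?_
    have hne : r ≠ β i := fun h => hx (h ▸ (mem_roots hf).1 hr)
    exact ⟨fun h => h.not_gt, fun h => lt_of_le_of_ne (not_lt.1 h) hne⟩
  have := i.2
  omega

theorem card_roots_eq_natDegree_of_neg_one_pow_mul_eval_nonneg {f : ℝ[X]}
    (hK : 1 < f.natDegree) (hl : 0 < f.leadingCoeff) {β : Fin (f.natDegree - 1) → ℝ}
    (hanti : Antitone β) (hroots : (derivative f).roots = ↑(List.ofFn β))
    (hsign : ∀ i : Fin (f.natDegree - 1), 0 ≤ (-1) ^ (i.1 + 1) * f.eval (β i)) :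
    Multiset.card f.roots = f.natDegree := by
  have hf : f ≠ 0 := leadingCoeff_ne_zero.1 hl.ne'
  -- `M` and `b` stand in for `+∞` and `-∞`.
  obtain ⟨M, hM, hMβ⟩ : ∃ M, 0 < f.eval M ∧ ∀ i, β i ≤ M :=
    (((f.tendsto_atTop_of_leadingCoeff_nonneg (natDegree_pos_iff_degree_pos.1 (by omega))
      hl.le).eventually_gt_atTop 0).and
      (eventually_all.2 fun i => eventually_ge_atTop (β i))).exists
  obtain ⟨b, hb, hbβ⟩ : ∃ b, 0 < (-1) ^ f.natDegree * f.eval b ∧ ∀ i, b ≤ β i :=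
    (((tendsto_neg_one_pow_natDegree_mul_eval_atBot (by omega) hl).eventually_gt_atTop 0).and
      (eventually_all.2 fun i => eventually_le_atBot (β i))).exists
  have hchain := isChain_cons_ofFn_append_singleton (g := f.eval) (by omega) hanti hsign hM.le
    hMβ (by rw [show f.natDegree - 1 + 1 = f.natDegree by omega]; exact hb.le) hbβ
  have hcount := countP_ne_zero_le_card_filter_le_of_isChain f.continuous
    (Z := f.roots.toFinset) (fun z hz => Multiset.mem_toFinset.2 ((mem_roots hf).2 hz)) hchain
  have hb0 : f.eval b ≠ 0 := fun h => by simp [h] at hb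
  rw [List.countP_append, List.countP_singleton, if_pos (decide_eq_true hb0)] at hcount
  have hm : Multiset.card ((derivative f).roots.filter fun a => ¬f.IsRoot a) =
      (List.ofFn β).countP (fun a => f.eval a ≠ 0) := by
    rw [hroots, ← Multiset.countP_eq_card_filter, Multiset.coe_countP]
    rfl
  have hsum : Multiset.card ((derivative f).roots.filter f.IsRoot) +
      Multiset.card ((derivative f).roots.filter fun a => ¬f.IsRoot a) = f.natDegree - 1 := by
    rw [← Multiset.card_add, Multiset.filter_add_not, hroots, Multiset.coe_card, List.length_ofFn]
  have hC := card_filter_roots_eq_card_filter_roots_derivative_add_card_toFinset hf fun _ => True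
  simp only [Multiset.filter_true] at hC
  have hS := Finset.card_filter_le f.roots.toFinset (· ≤ M)
  exact le_antisymm (card_roots' f) (by omega)

end Polynomial

theorem stmt3 (f : Polynomial ℝ) (hK : 1 < f.natDegree) (hl : 0 < f.leadingCoeff)
    (β : Fin (f.natDegree - 1) → ℝ) (hanti : Antitone β)
    (hroots : (Polynomial.derivative f).roots = ↑(List.ofFn β)) :
    (∀ z : ℂ, Polynomial.aeval z f = 0 → z.im = 0) ↔
      (∀ i : Fin (f.natDegree - 1),
        (Odd (i.1 + 1) → f.eval (β i) ≤ 0) ∧ (Even (i.1 + 1) → 0 ≤ f.eval (β i))) := by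
  simp_rw [odd_imp_nonpos_and_even_imp_nonneg_iff]
  rw [← splits_iff_forall_aeval_eq_zero_im_eq_zero (leadingCoeff_ne_zero.1 hl.ne'),
    splits_iff_card_roots]
  exact ⟨fun h => neg_one_pow_mul_eval_nonneg_of_card_roots_eq h hl hanti hroots,
    card_roots_eq_natDegree_of_neg_one_pow_mul_eval_nonneg hK hl hanti hroots⟩
end

section
/- Let f be a real polynomial of degree K > 1 with positive leading coefficient such that all complex roots of f' are real, listed with multiplicity as β_{K−1} ≤ ... ≤ β_1. Then all complex roots of f are real and non-negative if and only if: f(β_i) ≤ 0 for odd i, f(β_i) ≥ 0 for even i, β_{K−1} ≥ 0, and (−1)^K f(0) ≥ 0. -/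
/-!
If all roots of `f` are real, Rolle's theorem on the two open half-lines cut out by a critical
point `β i` with `f (β i) ≠ 0` shows that exactly `i + 1` roots of `f` lie above `β i`, which fixes
the sign of `f (β i)`; on `[0, ∞)` it shows that all critical points are nonnegative.

Conversely, the sign conditions give, by the intermediate value theorem, a root of `f` in each of
the `K` intervals `[β 0, ∞)`, `[β (i + 1), β i]` and `[0, β (K - 2)]`. A point chosen in `j + 1`
consecutive intervals is a critical point of multiplicity at least `j`, hence a root of `f` of
multiplicity at least `j + 1`, so these `K` points are all the roots of `f`, counted with
multiplicity.
-/

open Polynomial Finset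

theorem neg_one_pow_mul_nonneg_iff (k : ℕ) (x : ℝ) :
    0 ≤ (-1) ^ k * x ↔ (Odd k → x ≤ 0) ∧ (Even k → 0 ≤ x) := by
  rcases Nat.even_or_odd k with h | h
  · simp [h, h.neg_one_pow, Nat.not_odd_iff_even.mpr h]
  · simp [h, h.neg_one_pow, Nat.not_even_iff_odd.mpr h]

theorem mul_nonpos_of_neg_one_pow_mul_nonneg_s4 {x y : ℝ} (n : ℕ)
    (hx : 0 ≤ (-1) ^ (n + 1) * x) (hy : 0 ≤ (-1) ^ n * y) : x * y ≤ 0 := by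
  rcases neg_one_pow_eq_or ℝ n with h | h <;> simp only [pow_succ, h] at hx hy <;> nlinarith

theorem Fin.card_filter_eq_le_of_interlace {α : Type*} [LinearOrder α] {m : ℕ}
    {t : Fin (m + 1) → α} {β : Fin m → α} (h : ∀ k, t k.succ ≤ β k ∧ β k ≤ t k.castSucc)
    (v : α) : #{i | t i = v} ≤ #{k | β k = v} + 1 := by
  have hanti : Antitone t := Fin.antitone_iff_succ_le.mpr fun k => (h k).1.trans (h k).2
  set S : Finset (Fin (m + 1)) := {i | t i = v}
  rcases S.eq_empty_or_nonempty with hS | hS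
  · simp [hS]
  have htop : t (S.max' hS) = v := (mem_filter.mp (S.max'_mem hS)).2
  have hsub : S ⊆ insert (S.max' hS) (({k | β k = v} : Finset (Fin m)).map Fin.castSuccEmb) := by
    intro i hi
    rcases eq_or_ne i (S.max' hS) with rfl | hne
    · exact mem_insert_self _ _
    have hlt : i < S.max' hS := lt_of_le_of_ne (S.le_max' i hi) hne
    obtain ⟨k, rfl⟩ := Fin.exists_castSucc_eq.mpr (Fin.ne_last_of_lt hlt)
    have hti : t k.castSucc = v := (mem_filter.mp hi).2
    refine mem_insert_of_mem
      (mem_map.mpr ⟨k, mem_filter.mpr ⟨mem_univ _, le_antisymm ?_ ?_⟩, rfl⟩)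
    · exact hti ▸ (h k).2
    · exact htop ▸ (hanti (Fin.castSucc_lt_iff_succ_le.mp hlt)).trans (h k).1
  calc #S ≤ _ := card_le_card hsub
    _ ≤ _ := card_insert_le _ _
    _ = _ := by rw [card_map]

namespace Multiset

theorem card_filter_ofFn {α : Type*} {m : ℕ} (g : Fin m → α) (P : α → Prop) [DecidablePred P] :
    card ((List.ofFn g : Multiset α).filter P) = #{i | P (g i)} := by
  rw [← Fin.univ_val_map, filter_map, card_map]
  rfl

theorem count_ofFn {α : Type*} [DecidableEq α] {m : ℕ} (g : Fin m → α) (v : α) :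
    count v (List.ofFn g : Multiset α) = #{i | g i = v} := by
  simp only [count_eq_card_filter_eq, card_filter_ofFn, eq_comm]

theorem neg_one_pow_card_filter_lt_mul_prod_sub_pos {a : ℝ} {s : Multiset ℝ} (ha : a ∉ s) :
    0 < (-1) ^ card (s.filter (a < ·)) * (s.map (a - ·)).prod := by
  induction s using Multiset.induction_on with
  | empty => simp
  | cons b s ih =>
    rw [mem_cons, not_or] at ha
    have ih := ih ha.2
    rw [map_cons, prod_cons]
    rcases lt_or_gt_of_ne ha.1 with hab | hab
    · rw [filter_cons_of_pos _ hab, card_cons, pow_succ]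
      have : 0 < b - a := sub_pos.mpr hab
      nlinarith
    · rw [filter_cons_of_neg _ hab.not_gt]
      have : 0 < a - b := sub_pos.mpr hab
      nlinarith

end Multiset

namespace Polynomial

theorem card_roots_filter_le_derivative (p : ℝ[X]) (P : ℝ → Prop) [DecidablePred P]
    (hP : {x | P x}.OrdConnected) :
    Multiset.card (p.roots.filter P) ≤ Multiset.card ((derivative p).roots.filter P) + 1 := by
  rcases eq_or_ne (derivative p) 0 with hp' | hp'
  · rw [eq_C_of_derivative_eq_zero hp']
    simp
  have hp : p ≠ 0 := ne_of_apply_ne derivative (by rwa [derivative_zero])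
  set R := p.roots.filter P
  set D := (derivative p).roots.filter P
  have hinter : R.toFinset.card ≤ (D.toFinset \ R.toFinset).card + 1 := by
    refine Finset.card_le_sdiff_of_interleaved fun x hx y hy hxy _ => ?_
    simp only [R, Multiset.mem_toFinset, Multiset.mem_filter, mem_roots hp] at hx hy
    obtain ⟨z, hz, hz0⟩ := exists_deriv_eq_zero hxy p.continuousOn (hx.1.trans hy.1.symm)
    refine ⟨z, ?_, hz⟩
    simp only [D, Multiset.mem_toFinset, Multiset.mem_filter, mem_roots hp', IsRoot, ← p.deriv]
    exact ⟨hz0, hP.out hx.2 hy.2 (Set.Ioo_subset_Icc_self hz)⟩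
  have hcount : ∀ x ∈ R.toFinset, R.count x - 1 ≤ D.count x := fun x hx => by
    have hPx := (Multiset.mem_filter.mp (Multiset.mem_toFinset.mp hx)).2
    rw [Multiset.count_filter_of_pos hPx, Multiset.count_filter_of_pos hPx, count_roots,
      count_roots]
    exact rootMultiplicity_sub_one_le_derivative_rootMultiplicity p x
  calc Multiset.card R = ∑ x ∈ R.toFinset, (R.count x - 1 + 1) := by
        rw [← Multiset.toFinset_sum_count_eq]
        refine Finset.sum_congr rfl fun x hx => ?_
        have := Multiset.count_pos.mpr (Multiset.mem_toFinset.mp hx)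
        omega
    _ = ∑ x ∈ R.toFinset, (R.count x - 1) + R.toFinset.card := by
        rw [Finset.sum_add_distrib, Finset.card_eq_sum_ones]
    _ ≤ ∑ x ∈ R.toFinset, D.count x + ((D.toFinset \ R.toFinset).card + 1) :=
        add_le_add (Finset.sum_le_sum hcount) hinter
    _ ≤ ∑ x ∈ R.toFinset, D.count x + (∑ x ∈ D.toFinset \ R.toFinset, D.count x + 1) := by
        rw [Finset.card_eq_sum_ones]
        gcongr with x hx
        exact Multiset.count_pos.mpr (Multiset.mem_toFinset.mp (Finset.mem_sdiff.mp hx).1)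
    _ = Multiset.card D + 1 := by
        rw [← add_assoc, ← Finset.sum_union Finset.disjoint_sdiff,
          Finset.union_sdiff_self_eq_union, ← Multiset.toFinset_sum_count_eq,
          ← Finset.sum_subset Finset.subset_union_right]
        intro x _ hx
        exact Multiset.count_eq_zero.mpr (mt Multiset.mem_toFinset.mpr hx)

variable {p : ℝ[X]}

theorem eval_eq_leadingCoeff_mul_prod_sub (hsplit : Multiset.card p.roots = p.natDegree)
    (a : ℝ) : p.eval a = p.leadingCoeff * (p.roots.map (a - ·)).prod := by
  conv_lhs => rw [← C_leadingCoeff_mul_prod_multiset_X_sub_C hsplit]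
  simp [eval_multiset_prod, Multiset.map_map]

theorem neg_one_pow_card_roots_filter_lt_mul_eval_pos
    (hsplit : Multiset.card p.roots = p.natDegree) (hlc : 0 < p.leadingCoeff) {a : ℝ}
    (ha : ¬ p.IsRoot a) : 0 < (-1) ^ Multiset.card (p.roots.filter (a < ·)) * p.eval a := by
  have hp : p ≠ 0 := leadingCoeff_ne_zero.mp hlc.ne'
  have hmem : a ∉ p.roots := fun h => ha ((mem_roots hp).mp h)
  rw [eval_eq_leadingCoeff_mul_prod_sub hsplit, mul_left_comm]
  exact mul_pos hlc (Multiset.neg_one_pow_card_filter_lt_mul_prod_sub_pos hmem)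

theorem forall_mem_roots_derivative_of_forall_mem_roots
    (hsplit : Multiset.card p.roots = p.natDegree) (P : ℝ → Prop) [DecidablePred P]
    (hP : {x | P x}.OrdConnected) (h : ∀ x ∈ p.roots, P x) :
    ∀ x ∈ (derivative p).roots, P x := by
  have hrolle := card_roots_filter_le_derivative p P hP
  have hdeg : Multiset.card (derivative p).roots ≤ p.natDegree - 1 :=
    (card_roots' _).trans (natDegree_derivative_le p)
  rw [Multiset.filter_eq_self.mpr h, hsplit] at hrolle
  have hfilter : (derivative p).roots.filter P = (derivative p).roots :=
    Multiset.eq_of_le_of_card_le (Multiset.filter_le _ _) (by omega)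
  intro x hx
  rw [← hfilter] at hx
  exact Multiset.of_mem_filter hx

theorem neg_one_pow_natDegree_mul_eval_zero_nonneg
    (hsplit : Multiset.card p.roots = p.natDegree) (hlc : 0 < p.leadingCoeff)
    (h : ∀ x ∈ p.roots, 0 ≤ x) : 0 ≤ (-1) ^ p.natDegree * p.eval 0 := by
  by_cases h0 : p.IsRoot 0
  · simp [h0.eq_zero]
  have hpos : ∀ x ∈ p.roots, 0 < x := fun x hx => (h x hx).lt_of_ne <| by
    rintro rfl
    exact h0 ((mem_roots (leadingCoeff_ne_zero.mp hlc.ne')).mp hx)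
  have := neg_one_pow_card_roots_filter_lt_mul_eval_pos hsplit hlc h0
  rw [Multiset.filter_eq_self.mpr hpos, hsplit] at this
  exact this.le

theorem neg_one_pow_succ_mul_eval_nonneg_of_roots_derivative
    (hsplit : Multiset.card p.roots = p.natDegree) (hlc : 0 < p.leadingCoeff) {m : ℕ}
    {β : Fin m → ℝ} (hanti : Antitone β) (hroots : (derivative p).roots = List.ofFn β)
    (i : Fin m) : 0 ≤ (-1) ^ (i.1 + 1) * p.eval (β i) := by
  by_cases hi : p.IsRoot (β i)
  · simp [hi.eq_zero]
  have hp : p ≠ 0 := leadingCoeff_ne_zero.mp hlc.ne'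
  have habove := card_roots_filter_le_derivative p (β i < ·) Set.ordConnected_Ioi
  have hbelow := card_roots_filter_le_derivative p (· < β i) Set.ordConnected_Iio
  have hsplit_at : Multiset.card (p.roots.filter (β i < ·)) +
      Multiset.card (p.roots.filter (· < β i)) = p.natDegree := by
    have hnot : p.roots.filter (fun x => ¬ β i < x) = p.roots.filter (· < β i) :=
      Multiset.filter_congr fun x hx => by
        have : x ≠ β i := fun h => hi (h ▸ (mem_roots hp).mp hx)
        exact ⟨fun h => (not_lt.mp h).lt_of_ne this, fun h => h.not_gt⟩
    rw [← hsplit, ← hnot, ← Multiset.card_add, Multiset.filter_add_not]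
  have hderiv_above : Multiset.card ((derivative p).roots.filter (β i < ·)) ≤ i := by
    rw [hroots, Multiset.card_filter_ofFn, ← Fin.card_Iio i]
    exact card_le_card fun j hj => mem_Iio.mpr (hanti.reflect_lt (by simpa using hj))
  have hderiv_below : Multiset.card ((derivative p).roots.filter (· < β i)) ≤ m - 1 - i := by
    rw [hroots, Multiset.card_filter_ofFn, ← Fin.card_Ioi i]
    exact card_le_card fun j hj => mem_Ioi.mpr (hanti.reflect_lt (by simpa using hj))
  have hm : m ≤ p.natDegree - 1 := by
    have := (card_roots' (derivative p)).trans (natDegree_derivative_le p)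
    rwa [hroots, Multiset.coe_card, List.length_ofFn] at this
  have hcount : Multiset.card (p.roots.filter (β i < ·)) = i.1 + 1 := by
    have := i.isLt
    omega
  rw [← hcount]
  exact (neg_one_pow_card_roots_filter_lt_mul_eval_pos hsplit hlc hi).le

theorem forall_aeval_complex_eq_zero_iff (hp : p ≠ 0) (P : ℝ → Prop) :
    (∀ z : ℂ, aeval z p = 0 → z.im = 0 ∧ P z.re) ↔
      Multiset.card p.roots = p.natDegree ∧ ∀ x ∈ p.roots, P x := by
  have hmap : p.map (algebraMap ℝ ℂ) ≠ 0 :=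
    (Polynomial.map_ne_zero_iff (algebraMap ℝ ℂ).injective).mpr hp
  have hmem : ∀ z : ℂ, z ∈ (p.map (algebraMap ℝ ℂ)).roots ↔ aeval z p = 0 := fun z => by
    rw [mem_roots hmap, IsRoot, eval_map, ← aeval_def]
  constructor
  · intro h
    have hle : (p.map (algebraMap ℝ ℂ)).roots ≤ p.roots.map (algebraMap ℝ ℂ) := by
      refine Multiset.le_iff_count.mpr fun z => ?_
      by_cases hz : z ∈ (p.map (algebraMap ℝ ℂ)).roots
      · have hz_real : z = algebraMap ℝ ℂ z.re :=
          Complex.ext (by simp) (by simp [(h z ((hmem z).mp hz)).1])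
        rw [hz_real, count_roots, ← eq_rootMultiplicity_map (algebraMap ℝ ℂ).injective,
          Multiset.count_map_eq_count' _ _ (algebraMap ℝ ℂ).injective, count_roots]
      · simp [Multiset.count_eq_zero_of_notMem hz]
    have hcard := Multiset.card_le_card hle
    rw [Multiset.card_map, splits_iff_card_roots.mp (IsAlgClosed.splits _), natDegree_map]
      at hcard
    refine ⟨(card_roots' p).antisymm hcard, fun x hx => ?_⟩
    have hx' : aeval (algebraMap ℝ ℂ x) p = 0 := by
      rw [aeval_algebraMap_apply_eq_algebraMap_eval, (mem_roots hp).mp hx, map_zero]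
    simpa using (h _ hx').2
  · rintro ⟨hsplit, h⟩ z hz
    rw [← hmem, ← roots_map_of_injective_of_card_eq_natDegree (algebraMap ℝ ℂ).injective
      hsplit] at hz
    obtain ⟨x, hx, rfl⟩ := Multiset.mem_map.mp hz
    simpa using h x hx

theorem exists_isRoot_mem_Icc_of_mul_nonpos {a b : ℝ} (hab : a ≤ b)
    (h : p.eval a * p.eval b ≤ 0) : ∃ x ∈ Set.Icc a b, p.IsRoot x := by
  rcases mul_nonpos_iff.mp h with ⟨ha, hb⟩ | ⟨ha, hb⟩
  · exact intermediate_value_Icc' hab p.continuousOn ⟨hb, ha⟩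
  · exact intermediate_value_Icc hab p.continuousOn ⟨ha, hb⟩

theorem exists_isRoot_ge_of_eval_nonpos (hdeg : 0 < p.degree) (hlc : 0 < p.leadingCoeff)
    {a : ℝ} (ha : p.eval a ≤ 0) : ∃ x, a ≤ x ∧ p.IsRoot x := by
  obtain ⟨b, hb, hab⟩ :=
    ((p.tendsto_atTop_of_leadingCoeff_nonneg hdeg hlc.le).eventually_ge_atTop 0
      |>.and (Filter.eventually_ge_atTop a)).exists
  obtain ⟨x, hx, hroot⟩ :=
    exists_isRoot_mem_Icc_of_mul_nonpos hab (mul_nonpos_of_nonpos_of_nonneg ha hb)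
  exact ⟨x, hx.1, hroot⟩

theorem roots_eq_ofFn_of_interlace (hp : p ≠ 0) {m : ℕ} (hdeg : p.natDegree = m + 1)
    {t : Fin (m + 1) → ℝ} {β : Fin m → ℝ} (hroots : (derivative p).roots = List.ofFn β)
    (ht : ∀ i, p.IsRoot (t i)) (h : ∀ k, t k.succ ≤ β k ∧ β k ≤ t k.castSucc) :
    p.roots = List.ofFn t := by
  have hle : (List.ofFn t : Multiset ℝ) ≤ p.roots := by
    refine Multiset.le_iff_count.mpr fun v => ?_
    rw [Multiset.count_ofFn, count_roots]
    by_cases hv : p.IsRoot v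
    · calc #{i | t i = v} ≤ #{k | β k = v} + 1 := Fin.card_filter_eq_le_of_interlace h v
        _ = (derivative p).rootMultiplicity v + 1 := by
            rw [← count_roots, hroots, Multiset.count_ofFn]
        _ = p.rootMultiplicity v := by
            have := (rootMultiplicity_pos hp).mpr hv
            rw [derivative_rootMultiplicity_of_root hv]
            omega
    · rw [card_eq_zero.mpr (filter_eq_empty_iff.mpr fun i _ (hi : t i = v) => hv (hi ▸ ht i))]
      exact Nat.zero_le _
  refine (Multiset.eq_of_le_of_card_le hle ?_).symm
  rw [Multiset.coe_card, List.length_ofFn, ← hdeg]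
  exact card_roots' p

theorem card_roots_eq_natDegree_and_forall_le_of_alternating (hlc : 0 < p.leadingCoeff)
    {m : ℕ} (hdeg : p.natDegree = m + 1) {β : Fin m → ℝ} (hanti : Antitone β)
    (hroots : (derivative p).roots = List.ofFn β) {b : ℝ} (hb : ∀ k, b ≤ β k)
    (hsign : ∀ k : Fin m, 0 ≤ (-1) ^ (k.1 + 1) * p.eval (β k))
    (hsign_b : 0 ≤ (-1) ^ (m + 1) * p.eval b) :
    Multiset.card p.roots = p.natDegree ∧ ∀ x ∈ p.roots, b ≤ x := by
  -- Appending `b` to the critical points makes the last interval `[b, β (m - 1)]` a middle one.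
  set γ : Fin (m + 1) → ℝ := Fin.snoc β b
  have hγ_sign : ∀ i : Fin (m + 1), 0 ≤ (-1) ^ (i.1 + 1) * p.eval (γ i) :=
    Fin.lastCases (by simpa [γ] using hsign_b) fun k => by simpa [γ] using hsign k
  have hγ_ge : ∀ i, b ≤ γ i := Fin.lastCases (by simp [γ]) fun k => by simpa [γ] using hb k
  have hγ_step : ∀ k : Fin m, γ k.succ ≤ γ k.castSucc := by
    intro k
    obtain ⟨j, hj⟩ | hlast := k.succ.eq_castSucc_or_eq_last
    · have hkj : k ≤ j := by
        have := Fin.castSucc_lt_succ (i := k)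
        rw [hj, Fin.castSucc_lt_castSucc_iff] at this
        exact this.le
      simpa [γ, hj] using hanti hkj
    · simpa [γ, hlast] using hb k
  have hroot : ∀ i : Fin (m + 1), ∃ x, p.IsRoot x ∧ γ i ≤ x ∧
      ∀ k : Fin m, k.succ = i → x ≤ γ k.castSucc := by
    refine Fin.cases ?_ fun k => ?_
    · have hdeg_pos : 0 < p.degree := natDegree_pos_iff_degree_pos.mp (by omega)
      have h0 : p.eval (γ 0) ≤ 0 := by simpa using hγ_sign 0
      obtain ⟨x, hx, hroot⟩ := exists_isRoot_ge_of_eval_nonpos hdeg_pos hlc h0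
      exact ⟨x, hroot, hx, fun k hk => absurd hk (Fin.succ_ne_zero k)⟩
    · have hprod : p.eval (γ k.succ) * p.eval (γ k.castSucc) ≤ 0 :=
        mul_nonpos_of_neg_one_pow_mul_nonneg_s4 (k.1 + 1) (by simpa using hγ_sign k.succ)
          (by simpa using hγ_sign k.castSucc)
      obtain ⟨x, hx, hroot⟩ := exists_isRoot_mem_Icc_of_mul_nonpos (hγ_step k) hprod
      exact ⟨x, hroot, hx.1, fun j hj => Fin.succ_injective _ hj ▸ hx.2⟩
  choose t ht hγt htγ using hroot
  have hroots_eq : p.roots = List.ofFn t :=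
    roots_eq_ofFn_of_interlace (leadingCoeff_ne_zero.mp hlc.ne') hdeg hroots ht fun k =>
      ⟨by simpa [γ] using htγ k.succ k rfl, by simpa [γ] using hγt k.castSucc⟩
  refine ⟨by rw [hroots_eq, Multiset.coe_card, List.length_ofFn, hdeg], fun x hx => ?_⟩
  rw [hroots_eq, Multiset.mem_coe, List.mem_ofFn] at hx
  obtain ⟨i, rfl⟩ := hx
  exact (hγ_ge i).trans (hγt i)

end Polynomial

theorem stmt4 (f : Polynomial ℝ) (hK : 1 < f.natDegree) (hl : 0 < f.leadingCoeff)
    (β : Fin (f.natDegree - 1) → ℝ) (hanti : Antitone β)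
    (hroots : (Polynomial.derivative f).roots = ↑(List.ofFn β)) :
    (∀ z : ℂ, Polynomial.aeval z f = 0 → z.im = 0 ∧ 0 ≤ z.re) ↔
      ((∀ i : Fin (f.natDegree - 1),
          (Odd (i.1 + 1) → f.eval (β i) ≤ 0) ∧ (Even (i.1 + 1) → 0 ≤ f.eval (β i))) ∧
        0 ≤ β ⟨f.natDegree - 2, by omega⟩ ∧
        0 ≤ (-1 : ℝ) ^ f.natDegree * f.eval 0) := by
  have hdeg : f.natDegree = f.natDegree - 1 + 1 := by omega
  simp only [← neg_one_pow_mul_nonneg_iff]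
  refine (forall_aeval_complex_eq_zero_iff (leadingCoeff_ne_zero.mp hl.ne') (0 ≤ ·)).trans
    ⟨fun ⟨hsplit, hnonneg⟩ => ⟨?_, ?_, ?_⟩, fun ⟨hsign, hlast, h0⟩ => ?_⟩
  · exact neg_one_pow_succ_mul_eval_nonneg_of_roots_derivative hsplit hl hanti hroots
  · refine forall_mem_roots_derivative_of_forall_mem_roots hsplit (0 ≤ ·) Set.ordConnected_Ici
      hnonneg _ ?_
    rw [hroots, Multiset.mem_coe, List.mem_ofFn]
    exact ⟨_, rfl⟩
  · exact neg_one_pow_natDegree_mul_eval_zero_nonneg hsplit hl hnonneg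
  · refine card_roots_eq_natDegree_and_forall_le_of_alternating hl hdeg hanti hroots
      (fun k => hlast.trans (hanti ?_)) hsign (by rwa [← hdeg])
    show k.1 ≤ f.natDegree - 2
    omega
end

section
/- Let f(x) = a_3 x^3 + a_2 x^2 + a_1 x + a_0 be a real polynomial with a_3 > 0 and assume a_2^2 − 3 a_1 a_3 ≥ 0. Then all three complex roots of f are real and non-negative if and only if a_2 ≤ 0, 0 ≤ a_1 ≤ a_2^2/(3 a_3), a_0 ≤ 0, and (−2a_2^3 + 9a_1a_2a_3 − 2(a_2^2 − 3a_1a_3)^{3/2})/(27 a_3^2) ≤ a_0 ≤ (−2a_2^3 + 9a_1a_2a_3 + 2(a_2^2 − 3a_1a_3)^{3/2})/(27 a_3^2). -/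
set_option maxHeartbeats 1000000 in
theorem stmt8 (a0 a1 a2 a3 : ℝ) (h3 : 0 < a3) (hD : 0 ≤ a2 ^ 2 - 3 * a1 * a3) :
    (∃ r s t : ℝ, 0 ≤ r ∧ 0 ≤ s ∧ 0 ≤ t ∧
        ∀ x : ℝ, a3 * x ^ 3 + a2 * x ^ 2 + a1 * x + a0 =
          a3 * (x - r) * (x - s) * (x - t)) ↔
      (a2 ≤ 0 ∧ 0 ≤ a1 ∧ a1 ≤ a2 ^ 2 / (3 * a3) ∧ a0 ≤ 0 ∧
        (-2 * a2 ^ 3 + 9 * a1 * a2 * a3 -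
            2 * (Real.sqrt (a2 ^ 2 - 3 * a1 * a3)) ^ 3) / (27 * a3 ^ 2) ≤ a0 ∧
        a0 ≤ (-2 * a2 ^ 3 + 9 * a1 * a2 * a3 +
            2 * (Real.sqrt (a2 ^ 2 - 3 * a1 * a3)) ^ 3) / (27 * a3 ^ 2)) := by
  have ha3 : a3 ≠ 0 := ne_of_gt h3
  set D := Real.sqrt (a2 ^ 2 - 3 * a1 * a3) with hDdef
  have hDnn : 0 ≤ D := Real.sqrt_nonneg _
  have hDsq : D ^ 2 = a2 ^ 2 - 3 * a1 * a3 := Real.sq_sqrt hD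
  constructor
  · rintro ⟨r, s, t, hr, hs, ht, h⟩
    have ha0 : a0 = -(a3 * (r * s * t)) := by linear_combination h 0
    have ha2 : a2 = -(a3 * (r + s + t)) := by linear_combination (h 1 + h (-1)) / 2 - h 0
    have ha1 : a1 = a3 * (r*s + r*t + s*t) := by linear_combination (h 1 - h (-1)) / 2
    have key : (9*a1*a2*a3 - 2*a2^3 - 27*a3^2*a0)^2 ≤ 4*(a2^2 - 3*a1*a3)^3 := by
      rw [ha0, ha1, ha2]
      nlinarith [sq_nonneg (a3^3 * ((r - s) * (s - t) * (r - t)))]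
    have hcube : (2 * D^3)^2 = 4*(a2^2 - 3*a1*a3)^3 := by
      have h' : (2 * D^3)^2 = 4 * (D^2)^3 := by ring
      rw [h', hDsq]
    have hub : 9*a1*a2*a3 - 2*a2^3 - 27*a3^2*a0 ≤ 2 * D^3 := by
      nlinarith [pow_nonneg hDnn 3]
    have hlb : -(2 * D^3) ≤ 9*a1*a2*a3 - 2*a2^3 - 27*a3^2*a0 := by
      nlinarith [pow_nonneg hDnn 3]
    refine ⟨by nlinarith, by nlinarith [mul_nonneg hr hs, mul_nonneg hr ht, mul_nonneg hs ht], ?_,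
      by nlinarith [mul_nonneg (mul_nonneg hr hs) ht], ?_, ?_⟩
    · rw [le_div_iff₀ (by positivity)]; nlinarith
    · rw [div_le_iff₀ (by positivity)]; linarith
    · rw [le_div_iff₀ (by positivity)]; linarith
  · rintro ⟨h2, h1, h1', h0, hlo, hhi⟩
    rw [div_le_iff₀ (by positivity)] at hlo
    rw [le_div_iff₀ (by positivity)] at hhi
    have hN1 : 9*a1*a2*a3 - 2*a2^3 - 27*a3^2*a0 ≤ 2 * D^3 := by linarith
    have hN2 : -(2 * D^3) ≤ 9*a1*a2*a3 - 2*a2^3 - 27*a3^2*a0 := by linarith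
    obtain ⟨ca, sa, hsc, hKey⟩ : ∃ ca sa : ℝ, sa^2 + ca^2 = 1 ∧
        2*D^3*(4*ca^3 - 3*ca) = 9*a1*a2*a3 - 2*a2^3 - 27*a3^2*a0 := by
      rcases eq_or_lt_of_le hDnn with hD0 | hDpos
      · refine ⟨1, 0, by norm_num, ?_⟩
        rw [← hD0] at hN1 hN2 ⊢
        norm_num at hN1 hN2 ⊢
        linarith
      · set N := 9*a1*a2*a3 - 2*a2^3 - 27*a3^2*a0 with hNdef
        set K := N / (2*D^3) with hKdef
        have hK1 : -1 ≤ K := by rw [le_div_iff₀ (by positivity)]; linarith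
        have hK2 : K ≤ 1 := by rw [div_le_one (by positivity)]; linarith
        refine ⟨Real.cos (Real.arccos K / 3), Real.sin (Real.arccos K / 3),
          Real.sin_sq_add_cos_sq _, ?_⟩
        have hc3 := Real.cos_three_mul (Real.arccos K / 3)
        rw [show 3 * (Real.arccos K / 3) = Real.arccos K by ring,
          Real.cos_arccos hK1 hK2] at hc3
        rw [← hc3, hKdef]
        field_simp
    have h3' : Real.sqrt 3 ^ 2 = 3 := Real.sq_sqrt (by norm_num)
    set R := -a2 + 2*D*ca with hRdef
    set S := -a2 + 2*D*(-ca/2 - Real.sqrt 3/2*sa) with hSdef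
    set T := -a2 + 2*D*(-ca/2 + Real.sqrt 3/2*sa) with hTdef
    have hP1 : R + S + T = -(3*a2) := by rw [hRdef, hSdef, hTdef]; ring
    have hP2 : R*S + R*T + S*T = 9*a1*a3 := by
      rw [hRdef, hSdef, hTdef]
      linear_combination (-3 : ℝ)*hDsq + (-3*D^2)*hsc + (-(D^2*sa^2))*h3'
    have hP3 : R*S*T = -(27*a3^2*a0) := by
      rw [hRdef, hSdef, hTdef]
      linear_combination hKey + (3*a2)*hDsq + (3*a2*D^2 - 6*D^3*ca)*hsc +
        (a2*D^2*sa^2 - 2*D^3*ca*sa^2)*h3'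
    set r := R/(3*a3) with hrdef
    set s := S/(3*a3) with hsdef
    set t := T/(3*a3) with htdef
    have hv1 : a3 * (r+s+t) = -a2 := by
      have e : a3 * (r+s+t) = (R+S+T)/3 := by rw [hrdef, hsdef, htdef]; field_simp
      rw [e, hP1]; ring
    have hv2 : a3 * (r*s + r*t + s*t) = a1 := by
      have e : a3 * (r*s + r*t + s*t) = (R*S + R*T + S*T)/(9*a3) := by
        rw [hrdef, hsdef, htdef]; field_simp; ring
      rw [e, hP2]; field_simp
    have hv3 : a3 * (r*s*t) = -a0 := by
      have e : a3 * (r*s*t) = (R*S*T)/(27*a3^2) := by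
        rw [hrdef, hsdef, htdef]; field_simp; ring
      rw [e, hP3]; field_simp
    have hfac : ∀ x : ℝ, a3 * x ^ 3 + a2 * x ^ 2 + a1 * x + a0 =
        a3 * (x - r) * (x - s) * (x - t) := by
      intro x
      linear_combination x^2 * hv1 - x * hv2 + hv3
    have hnonneg : ∀ u : ℝ, a3 * u ^ 3 + a2 * u ^ 2 + a1 * u + a0 = 0 → 0 ≤ u := by
      intro u hu
      by_contra hneg
      push_neg at hneg
      nlinarith [mul_nonneg (neg_nonneg.2 h2) (sq_nonneg u),
        mul_pos h3 (mul_pos (mul_pos (neg_pos.2 hneg) (neg_pos.2 hneg)) (neg_pos.2 hneg)),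
        mul_nonneg h1 (neg_nonneg.2 hneg.le)]
    exact ⟨r, s, t, hnonneg r (by rw [hfac r]; ring), hnonneg s (by rw [hfac s]; ring),
      hnonneg t (by rw [hfac t]; ring), hfac⟩
end

section
/- Let h be a q-Weil polynomial of degree 2g. Then every real root of h occurs with even multiplicity. -/
open Polynomial

/-- `h` is a `q`-Weil polynomial of degree `2*g`: its complex roots consist of
`g` conjugate pairs, each of complex absolute value `√q`. -/
def IsWeil (q g : ℕ) (h : Polynomial ℤ) : Prop :=
  ∃ w : Fin g → ℂ,
    (∀ i, ‖w i‖ = Real.sqrt q) ∧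
    h.map (Int.castRingHom ℂ) =
      ∏ i, ((Polynomial.X - Polynomial.C (w i)) *
            (Polynomial.X - Polynomial.C ((starRingEnd ℂ) (w i))))

/-! A real number is a root of `X - w` exactly when it is a root of `X - w̄`, so each
conjugate-pair factor contributes `0` or `2` to its multiplicity. -/

namespace Polynomial

variable {R : Type*} [CommRing R] [IsDomain R]

theorem rootMultiplicity_prod {ι : Type*} (s : Finset ι) (f : ι → R[X])
    (hf : ∏ i ∈ s, f i ≠ 0) (x : R) :
    rootMultiplicity x (∏ i ∈ s, f i) = ∑ i ∈ s, rootMultiplicity x (f i) := by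
  classical
  simp only [← count_roots, roots_prod f s hf, Multiset.count_bind]
  rfl

theorem even_rootMultiplicity_X_sub_C_mul_X_sub_C {x a b : R} (hab : x = a ↔ x = b) :
    Even (rootMultiplicity x ((X - C a) * (X - C b))) := by
  classical
  rw [rootMultiplicity_mul (mul_ne_zero (X_sub_C_ne_zero a) (X_sub_C_ne_zero b)),
    rootMultiplicity_X_sub_C, rootMultiplicity_X_sub_C]
  by_cases hxa : x = a
  · rw [if_pos hxa, if_pos (hab.mp hxa)]
    exact ⟨1, rfl⟩
  · rw [if_neg hxa, if_neg (hab.not.mp hxa)]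
    exact ⟨0, rfl⟩

end Polynomial

theorem Complex.ofReal_eq_iff_eq_conj (x : ℝ) (w : ℂ) :
    (x : ℂ) = w ↔ (x : ℂ) = starRingEnd ℂ w :=
  ⟨fun h => by rw [← h, Complex.conj_ofReal],
    fun h => by rw [← Complex.conj_conj w, ← h, Complex.conj_ofReal]⟩

theorem stmt11_general (q g : ℕ) (h : Polynomial ℤ) (hW : IsWeil q g h) :
    ∀ x : ℝ, Even (Polynomial.rootMultiplicity (x : ℂ) (h.map (Int.castRingHom ℂ))) := by
  intro x
  obtain ⟨w, -, hprod⟩ := hW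
  have hne : ∏ i, (X - C (w i)) * (X - C (starRingEnd ℂ (w i))) ≠ 0 :=
    Finset.prod_ne_zero_iff.2 fun i _ => mul_ne_zero (X_sub_C_ne_zero _) (X_sub_C_ne_zero _)
  rw [hprod, rootMultiplicity_prod _ _ hne]
  exact Finset.even_sum _ fun i _ =>
    even_rootMultiplicity_X_sub_C_mul_X_sub_C (Complex.ofReal_eq_iff_eq_conj x (w i))

theorem stmt11 (q g : ℕ) (hq : 0 < q) (h : Polynomial ℤ) (hW : IsWeil q g h) :
    ∀ x : ℝ, Even (Polynomial.rootMultiplicity (x : ℂ) (h.map (Int.castRingHom ℂ))) :=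
  stmt11_general q g h hW
end

section
/- Let q be a positive integer and a, b integers, and set h(x) = x^4 + a x^3 + b x^2 + a q x + q^2. Then h is a q-Weil polynomial (all four complex roots have absolute value √q and come in conjugate pairs) if and only if |a| ≤ 4√q and −2q + 2√q·|a| ≤ b ≤ 2q + a^2/4. -/
open Polynomial

/-!
Pairing each root with its conjugate, `h` is a `q`-Weil polynomial of degree 4 exactly when
`h = (X² + c₁X + q)(X² + c₂X + q)` with real `|cᵢ| ≤ 2√q`: a conjugate pair `w, w̄` with `|w| = √q`
is the same thing as a real quadratic `X² + cX + q` with `c = -2 Re w`, `c² ≤ 4q`.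
Comparing coefficients, `c₁ + c₂ = a` and `c₁c₂ = b - 2q`, so the question becomes when the two
roots of a real quadratic with given sum and product lie in `[-m, m]`, `m = 2√q`. They are real iff
the discriminant is nonnegative (`b ≤ 2q + a²/4`), and then they lie in `[-m, m]` iff
`(m - c₁)(m - c₂) ≥ 0`, `(m + c₁)(m + c₂) ≥ 0` and `|c₁ + c₂| ≤ 2m`, which are the other two conditions.
-/

open ComplexConjugate

theorem exists_add_eq_and_mul_eq_of_le_sq {a p : ℝ} (h : 4 * p ≤ a ^ 2) :
    ∃ x y : ℝ, x + y = a ∧ x * y = p := by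
  set d := √(a ^ 2 - 4 * p)
  have hd : d ^ 2 = a ^ 2 - 4 * p := Real.sq_sqrt (by linarith)
  exact ⟨(a + d) / 2, (a - d) / 2, by ring, by linear_combination -hd / 4⟩

theorem abs_le_of_abs_add_le_of_le_mul {m x y : ℝ} (hsum : |x + y| ≤ 2 * m)
    (hprod : m * |x + y| - m ^ 2 ≤ x * y) : |x| ≤ m := by
  have hm : 0 ≤ m := by linarith [abs_nonneg (x + y)]
  -- `x` and `y` lie on the same side of `m` and on the same side of `-m`,
  -- and `hsum` rules out the outer sides.
  have hm₁ : 0 ≤ (m - x) * (m - y) := by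
    nlinarith [mul_nonneg hm (sub_nonneg.2 (le_abs_self (x + y)))]
  have hm₂ : 0 ≤ (m + x) * (m + y) := by
    nlinarith [mul_nonneg hm (sub_nonneg.2 (neg_abs_le (x + y)))]
  obtain ⟨hl, hr⟩ := abs_le.mp hsum
  rw [abs_le]
  constructor <;> nlinarith

theorem exists_abs_le_add_mul_iff {m a p : ℝ} :
    (∃ x y : ℝ, |x| ≤ m ∧ |y| ≤ m ∧ x + y = a ∧ x * y = p) ↔
      |a| ≤ 2 * m ∧ m * |a| - m ^ 2 ≤ p ∧ p ≤ a ^ 2 / 4 := by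
  constructor
  · rintro ⟨x, y, hx, hy, rfl, rfl⟩
    obtain ⟨hx₁, hx₂⟩ := abs_le.mp hx
    obtain ⟨hy₁, hy₂⟩ := abs_le.mp hy
    refine ⟨(abs_add_le x y).trans (by linarith), ?_, by nlinarith [sq_nonneg (x - y)]⟩
    rcases abs_cases (x + y) with ⟨h, -⟩ | ⟨h, -⟩ <;> rw [h] <;> nlinarith
  · rintro ⟨hsum, hprod, hdisc⟩
    obtain ⟨x, y, rfl, rfl⟩ := exists_add_eq_and_mul_eq_of_le_sq (a := a) (p := p) (by linarith)
    refine ⟨x, y, abs_le_of_abs_add_le_of_le_mul hsum hprod, ?_, rfl, rfl⟩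
    rw [add_comm x y] at hsum hprod
    rw [mul_comm x y] at hprod
    exact abs_le_of_abs_add_le_of_le_mul hsum hprod

theorem Complex.exists_norm_eq_re_eq {r t : ℝ} (h : |t| ≤ r) : ∃ w : ℂ, ‖w‖ = r ∧ w.re = t := by
  refine ⟨⟨t, √(r ^ 2 - t ^ 2)⟩, ?_, rfl⟩
  have hr : 0 ≤ r := (abs_nonneg t).trans h
  have ht : t ^ 2 ≤ r ^ 2 := sq_le_sq' (abs_le.mp h).1 (abs_le.mp h).2
  rw [Complex.norm_def, Complex.normSq_mk, ← sq, ← sq, Real.sq_sqrt (by linarith)]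
  simp [Real.sqrt_sq hr]

theorem X_sub_C_mul_X_sub_C_conj (w : ℂ) :
    (X - C w) * (X - C (conj w)) =
      X ^ 2 + C ((-2 * w.re : ℝ) : ℂ) * X + C ((‖w‖ ^ 2 : ℝ) : ℂ) := by
  have hadd : w + conj w = ((2 * w.re : ℝ) : ℂ) := by
    push_cast [Complex.add_conj]; ring
  have hmul : w * conj w = ((‖w‖ ^ 2 : ℝ) : ℂ) := by
    push_cast [Complex.mul_conj, Complex.normSq_eq_norm_sq]; ring
  calc (X - C w) * (X - C (conj w)) = X ^ 2 - C (w + conj w) * X + C (w * conj w) := by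
        simp only [C_add, C_mul]; ring
    _ = _ := by
        rw [hadd, hmul]
        simp only [C_neg, C_mul, Complex.ofReal_neg, Complex.ofReal_mul]
        ring
theorem quadratic_mul_quadratic {R : Type*} [CommRing R] (u v k : R) :
    (X ^ 2 + C u * X + C k) * (X ^ 2 + C v * X + C k) =
      X ^ 4 + C (u + v) * X ^ 3 + C (u * v + 2 * k) * X ^ 2 + C (k * (u + v)) * X + C (k ^ 2) := by
  simp only [C_add, C_mul, map_ofNat, C_pow]
  ring

theorem quartic_eq_quartic_iff {R : Type*} [CommRing R] {a b c d a' b' c' d' : R} :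
    X ^ 4 + C a * X ^ 3 + C b * X ^ 2 + C c * X + C d =
        X ^ 4 + C a' * X ^ 3 + C b' * X ^ 2 + C c' * X + C d' ↔
      a = a' ∧ b = b' ∧ c = c' ∧ d = d' := by
  refine ⟨fun h ↦ ⟨?_, ?_, ?_, ?_⟩, by rintro ⟨rfl, rfl, rfl, rfl⟩; rfl⟩
  · simpa using congrArg (coeff · 3) h
  · simpa using congrArg (coeff · 2) h
  · simpa using congrArg (coeff · 1) h
  · simpa using congrArg (coeff · 0) h

theorem exists_norm_eq_X_sub_C_mul_X_sub_C_conj_eq {r c : ℝ} (hc : |c| ≤ 2 * r) :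
    ∃ w : ℂ, ‖w‖ = r ∧
      (X - C w) * (X - C (conj w)) = X ^ 2 + C (c : ℂ) * X + C ((r ^ 2 : ℝ) : ℂ) := by
  obtain ⟨w, hw, hre⟩ := Complex.exists_norm_eq_re_eq (r := r) (t := -c / 2)
    (by rw [abs_div, abs_neg, abs_two]; linarith)
  refine ⟨w, hw, ?_⟩
  rw [X_sub_C_mul_X_sub_C_conj, hw, hre]
  congr 4
  push_cast; ring

theorem isWeil_two_iff (q : ℕ) (h : ℤ[X]) :
    IsWeil q 2 h ↔ ∃ c₁ c₂ : ℝ, |c₁| ≤ 2 * √q ∧ |c₂| ≤ 2 * √q ∧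
      h.map (Int.castRingHom ℂ) =
        (X ^ 2 + C (c₁ : ℂ) * X + C (q : ℂ)) * (X ^ 2 + C (c₂ : ℂ) * X + C (q : ℂ)) := by
  have hq : ((√q ^ 2 : ℝ) : ℂ) = q := by simp
  constructor
  · rintro ⟨w, hw, hh⟩
    have hre i : |-2 * (w i).re| ≤ 2 * √q := by
      rw [abs_mul, abs_neg, abs_two, ← hw i]
      gcongr
      exact Complex.abs_re_le_norm _
    refine ⟨_, _, hre 0, hre 1, ?_⟩
    rw [hh, Fin.prod_univ_two, X_sub_C_mul_X_sub_C_conj, X_sub_C_mul_X_sub_C_conj, hw, hw, hq]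
  · rintro ⟨c₁, c₂, hc₁, hc₂, hh⟩
    obtain ⟨w₁, hw₁, hp₁⟩ := exists_norm_eq_X_sub_C_mul_X_sub_C_conj_eq hc₁
    obtain ⟨w₂, hw₂, hp₂⟩ := exists_norm_eq_X_sub_C_mul_X_sub_C_conj_eq hc₂
    refine ⟨![w₁, w₂], fun i ↦ by fin_cases i <;> assumption, ?_⟩
    rw [hh, Fin.prod_univ_two]
    simp only [Matrix.cons_val_zero, Matrix.cons_val_one]
    rw [hp₁, hp₂, hq]

theorem isWeil_quartic_iff (q : ℕ) (a b : ℤ) :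
    IsWeil q 2 (X ^ 4 + C a * X ^ 3 + C b * X ^ 2 + C (a * q) * X + C ((q : ℤ) ^ 2)) ↔
      ∃ c₁ c₂ : ℝ, |c₁| ≤ 2 * √q ∧ |c₂| ≤ 2 * √q ∧ c₁ + c₂ = a ∧ c₁ * c₂ = b - 2 * q := by
  rw [isWeil_two_iff]
  refine exists₂_congr fun c₁ c₂ ↦ and_congr_right' <| and_congr_right' ?_
  rw [quadratic_mul_quadratic]
  simp only [Polynomial.map_add, Polynomial.map_mul, Polynomial.map_pow, map_X, map_C,
    Int.coe_castRingHom, Int.cast_mul, Int.cast_pow, Int.cast_natCast, quartic_eq_quartic_iff]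
  constructor
  · rintro ⟨ha, hb, -⟩
    have hb' : (b : ℝ) = c₁ * c₂ + 2 * q := mod_cast hb
    exact ⟨mod_cast ha.symm, by linarith⟩
  · rintro ⟨ha, hb⟩
    have ha' : (a : ℂ) = c₁ + c₂ := mod_cast ha.symm
    have hb' : (b : ℂ) = c₁ * c₂ + 2 * q := mod_cast (by linarith : (b : ℝ) = c₁ * c₂ + 2 * q)
    exact ⟨ha', hb', by rw [ha']; ring, trivial⟩

theorem stmt15_general (q : ℕ) (a b : ℤ) :
    IsWeil q 2 (X ^ 4 + C a * X ^ 3 + C b * X ^ 2 + C (a * q) * X + C ((q : ℤ) ^ 2)) ↔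
      (|(a : ℝ)| ≤ 4 * Real.sqrt q ∧
        -2 * q + 2 * Real.sqrt q * |(a : ℝ)| ≤ (b : ℝ) ∧
        (b : ℝ) ≤ 2 * q + (a : ℝ) ^ 2 / 4) := by
  have hq : (2 * √q) ^ 2 = 4 * q := by rw [mul_pow, Real.sq_sqrt q.cast_nonneg]; norm_num
  rw [isWeil_quartic_iff, exists_abs_le_add_mul_iff, hq]
  refine and_congr ?_ (and_congr ?_ ?_) <;> constructor <;> intro h <;> linarith

theorem stmt15 (q : ℕ) (hq : 0 < q) (a b : ℤ) :
    IsWeil q 2 (X ^ 4 + C a * X ^ 3 + C b * X ^ 2 + C (a * q) * X + C ((q : ℤ) ^ 2)) ↔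
      (|(a : ℝ)| ≤ 4 * Real.sqrt q ∧
        -2 * q + 2 * Real.sqrt q * |(a : ℝ)| ≤ (b : ℝ) ∧
        (b : ℝ) ≤ 2 * q + (a : ℝ) ^ 2 / 4) :=
  stmt15_general q a b
end

section
/- Let h(x) = x^6 + a_1 x^5 + a_2 x^4 + a_3 x^3 + a_2 q x^2 + a_1 q^2 x + q^3 with a_1, a_2, a_3 ∈ ℤ and q a positive integer. Then h is a q-Weil polynomial if and only if all of the following hold: (a) |a_1| ≤ 6√q; (b) 4√q|a_1| − 9q ≤ a_2; (c) a_2 ≤ a_1^2/3 + 3q; (d) −(2/27)a_1^3 + (1/3)a_1a_2 + q a_1 − (2/27)(a_1^2 − 3a_2 + 9q)^{3/2} ≤ a_3 ≤ −(2/27)a_1^3 + (1/3)a_1a_2 + q a_1 + (2/27)(a_1^2 − 3a_2 + 9q)^{3/2}; and (e) −2qa_1 − 2√q a_2 − 2q√q ≤ a_3 ≤ −2qa_1 + 2√q a_2 + 2q√q. (The quantity a_1^2 − 3a_2 + 9q in (d) is non-negative by (c).) -/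
/-!
Each conjugate pair contributes a real quadratic `X ^ 2 - b X + q` with `b = 2 Re w`, and a
point of absolute value `√q` with real part `b / 2` exists exactly when `|b| ≤ 2√q`. Comparing
coefficients, `h` is `q`-Weil iff the cubic with elementary symmetric functions `-a₁`,
`a₂ - 3q`, `2q a₁ - a₃` has three real roots in `[-2√q, 2√q]`. The roots are real iff the
discriminant is nonnegative, which is (c) and (d); Viète's trigonometric formula produces them.
Three reals lie in `[-M, M]` iff the elementary symmetric functions of the `M - bᵢ` and of the
`M + bᵢ` are nonnegative; for `M = 2√q` these conditions are (a), (b) and (e).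
-/

open Polynomial

open Real

section ThreeElements

variable {R : Type*} [CommRing R] [LinearOrder R] [IsStrictOrderedRing R]

theorem nonneg_of_esymm_nonneg {u v w : R} (h₁ : 0 ≤ u + v + w)
    (h₂ : 0 ≤ u * v + u * w + v * w) (h₃ : 0 ≤ u * v * w) : 0 ≤ u := by
  by_contra! hu
  have hx : 0 < -u := neg_pos.mpr hu
  -- `-u` is a root of `(x + u) (x + v) (x + w)`, whose coefficients are nonnegative
  have hpos : 0 < (-u) ^ 3 + (u + v + w) * (-u) ^ 2 + (u * v + u * w + v * w) * (-u) +
      u * v * w := by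
    positivity
  exact hpos.ne' (by ring)

theorem nonneg_and_nonneg_and_nonneg_iff {u v w : R} :
    0 ≤ u ∧ 0 ≤ v ∧ 0 ≤ w ↔
      0 ≤ u + v + w ∧ 0 ≤ u * v + u * w + v * w ∧ 0 ≤ u * v * w := by
  constructor
  · rintro ⟨hu, hv, hw⟩
    exact ⟨by positivity, by positivity, by positivity⟩
  · rintro ⟨h₁, h₂, h₃⟩
    refine ⟨nonneg_of_esymm_nonneg h₁ h₂ h₃, nonneg_of_esymm_nonneg (w := w) (v := u) ?_ ?_ ?_,
      nonneg_of_esymm_nonneg (v := u) (w := v) ?_ ?_ ?_⟩ <;> linarith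

/-- The three conditions on the right say that the elementary symmetric functions of the
`M - bᵢ` and of the `M + bᵢ` are nonnegative. -/
theorem abs_le_and_abs_le_and_abs_le_iff (M b₁ b₂ b₃ : R) :
    |b₁| ≤ M ∧ |b₂| ≤ M ∧ |b₃| ≤ M ↔
      |b₁ + b₂ + b₃| ≤ 3 * M ∧
      2 * M * |b₁ + b₂ + b₃| ≤ 3 * M ^ 2 + (b₁ * b₂ + b₁ * b₃ + b₂ * b₃) ∧
      |b₁ * b₂ * b₃ + M ^ 2 * (b₁ + b₂ + b₃)| ≤ M ^ 3 + M * (b₁ * b₂ + b₁ * b₃ + b₂ * b₃) := by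
  have hle := nonneg_and_nonneg_and_nonneg_iff (u := M - b₁) (v := M - b₂) (w := M - b₃)
  have hge := nonneg_and_nonneg_and_nonneg_iff (u := M + b₁) (v := M + b₂) (w := M + b₃)
  constructor
  · rintro ⟨h₁, h₂, h₃⟩
    rw [abs_le] at h₁ h₂ h₃
    obtain ⟨l₁, l₂, l₃⟩ := hle.1 ⟨by linarith, by linarith, by linarith⟩
    obtain ⟨g₁, g₂, g₃⟩ := hge.1 ⟨by linarith, by linarith, by linarith⟩
    have hM : 0 ≤ 2 * M := by linarith
    refine ⟨abs_le.2 ⟨by linarith, by linarith⟩, ?_, abs_le.2 ⟨by linarith, by linarith⟩⟩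
    rw [← abs_of_nonneg hM, ← abs_mul, abs_le]
    constructor <;> linarith
  · rintro ⟨h₁, h₂, h₃⟩
    have hM : 0 ≤ 2 * M := by linarith [abs_nonneg (b₁ + b₂ + b₃)]
    rw [← abs_of_nonneg hM, ← abs_mul, abs_le] at h₂
    rw [abs_le] at h₁ h₃
    obtain ⟨l₁, l₂, l₃⟩ := hle.2 ⟨by linarith, by linarith, by linarith⟩
    obtain ⟨g₁, g₂, g₃⟩ := hge.2 ⟨by linarith, by linarith, by linarith⟩
    exact ⟨abs_le.2 ⟨by linarith, by linarith⟩, abs_le.2 ⟨by linarith, by linarith⟩,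
      abs_le.2 ⟨by linarith, by linarith⟩⟩

end ThreeElements

/-- Viète: the roots are `2r cos (θ + 2πk/3)` where `cos 3θ = P / (2r³)`. -/
theorem exists_depressed_cubic_roots {r P : ℝ} (hr : 0 ≤ r) (hP : |P| ≤ 2 * r ^ 3) :
    ∃ y₁ y₂ y₃ : ℝ, y₁ + y₂ + y₃ = 0 ∧ y₁ * y₂ + y₁ * y₃ + y₂ * y₃ = -3 * r ^ 2 ∧
      y₁ * y₂ * y₃ = P := by
  set θ := arccos (P / (2 * r ^ 3)) / 3
  have hcos : 2 * r ^ 3 * (4 * cos θ ^ 3 - 3 * cos θ) = P := by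
    rcases hr.eq_or_lt with rfl | hr
    · have hP0 : P = 0 := abs_nonpos_iff.mp (by simpa using hP)
      simp [hP0]
    have hr3 : 0 < 2 * r ^ 3 := by positivity
    rw [← cos_three_mul, mul_div_cancel₀ _ three_ne_zero, cos_arccos, mul_div_cancel₀ _ hr3.ne']
    · rw [le_div_iff₀ hr3]; linarith [neg_abs_le P]
    · rw [div_le_iff₀ hr3]; linarith [le_abs_self P]
  have hsin := sin_sq_add_cos_sq θ
  have h3 : √3 ^ 2 = 3 := sq_sqrt zero_le_three
  refine ⟨2 * r * cos θ, -r * cos θ + √3 * r * sin θ, -r * cos θ - √3 * r * sin θ, by ring, ?_, ?_⟩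
  · linear_combination (-3 * r ^ 2) * hsin - r ^ 2 * sin θ ^ 2 * h3
  · linear_combination hcos - 2 * r ^ 3 * cos θ * sin θ ^ 2 * h3 - 6 * r ^ 3 * cos θ * hsin

theorem exists_esymm_eq_iff (σ₁ σ₂ σ₃ : ℝ) :
    (∃ b₁ b₂ b₃ : ℝ, b₁ + b₂ + b₃ = σ₁ ∧ b₁ * b₂ + b₁ * b₃ + b₂ * b₃ = σ₂ ∧ b₁ * b₂ * b₃ = σ₃) ↔
      3 * σ₂ ≤ σ₁ ^ 2 ∧ |2 * σ₁ ^ 3 - 9 * σ₁ * σ₂ + 27 * σ₃| ≤ 2 * √(σ₁ ^ 2 - 3 * σ₂) ^ 3 := by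
  constructor
  · rintro ⟨b₁, b₂, b₃, rfl, rfl, rfl⟩
    set D := (b₁ + b₂ + b₃) ^ 2 - 3 * (b₁ * b₂ + b₁ * b₃ + b₂ * b₃)
    have hD0 : 0 ≤ D := by nlinarith [sq_nonneg (b₁ - b₂), sq_nonneg (b₁ - b₃), sq_nonneg (b₂ - b₃)]
    refine ⟨by linarith, abs_le_of_sq_le_sq ?_ (by positivity)⟩
    have hdisc : 4 * D ^ 3 - (2 * (b₁ + b₂ + b₃) ^ 3 -
        9 * (b₁ + b₂ + b₃) * (b₁ * b₂ + b₁ * b₃ + b₂ * b₃) + 27 * (b₁ * b₂ * b₃)) ^ 2 = 27 * ((b₁ - b₂) * (b₁ - b₃) * (b₂ - b₃)) ^ 2 := by ring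
    have hsq : (√D ^ 3) ^ 2 = D ^ 3 := by rw [← pow_mul, mul_comm, pow_mul, sq_sqrt hD0]
    rw [mul_pow, hsq]
    linarith [sq_nonneg ((b₁ - b₂) * (b₁ - b₃) * (b₂ - b₃))]
  · rintro ⟨hD, hP⟩
    obtain ⟨y₁, y₂, y₃, h₁, h₂, h₃⟩ := exists_depressed_cubic_roots (sqrt_nonneg _) hP
    rw [sq_sqrt (by linarith)] at h₂
    refine ⟨(σ₁ + y₁) / 3, (σ₁ + y₂) / 3, (σ₁ + y₃) / 3, ?_, ?_, ?_⟩
    · linear_combination h₁ / 3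
    · linear_combination (2 * σ₁ * h₁ + h₂) / 9
    · linear_combination (σ₁ ^ 2 * h₁ + σ₁ * h₂ + h₃) / 27

theorem exists_esymm_eq_and_abs_le_iff (M σ₁ σ₂ σ₃ : ℝ) :
    (∃ b₁ b₂ b₃ : ℝ, |b₁| ≤ M ∧ |b₂| ≤ M ∧ |b₃| ≤ M ∧
      b₁ + b₂ + b₃ = σ₁ ∧ b₁ * b₂ + b₁ * b₃ + b₂ * b₃ = σ₂ ∧ b₁ * b₂ * b₃ = σ₃) ↔
      (3 * σ₂ ≤ σ₁ ^ 2 ∧ |2 * σ₁ ^ 3 - 9 * σ₁ * σ₂ + 27 * σ₃| ≤ 2 * √(σ₁ ^ 2 - 3 * σ₂) ^ 3) ∧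
      |σ₁| ≤ 3 * M ∧ 2 * M * |σ₁| ≤ 3 * M ^ 2 + σ₂ ∧ |σ₃ + M ^ 2 * σ₁| ≤ M ^ 3 + M * σ₂ := by
  constructor
  · rintro ⟨b₁, b₂, b₃, hb₁, hb₂, hb₃, rfl, rfl, rfl⟩
    exact ⟨(exists_esymm_eq_iff _ _ _).1 ⟨b₁, b₂, b₃, rfl, rfl, rfl⟩,
      (abs_le_and_abs_le_and_abs_le_iff M b₁ b₂ b₃).1 ⟨hb₁, hb₂, hb₃⟩⟩
  · rintro ⟨hreal, hM⟩
    obtain ⟨b₁, b₂, b₃, rfl, rfl, rfl⟩ := (exists_esymm_eq_iff _ _ _).2 hreal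
    obtain ⟨hb₁, hb₂, hb₃⟩ := (abs_le_and_abs_le_and_abs_le_iff M b₁ b₂ b₃).2 hM
    exact ⟨b₁, b₂, b₃, hb₁, hb₂, hb₃, rfl, rfl, rfl⟩

theorem Complex.exists_norm_eq_and_re_eq {ρ x : ℝ} (hx : |x| ≤ ρ) :
    ∃ z : ℂ, ‖z‖ = ρ ∧ z.re = x := by
  have hρ : 0 ≤ ρ := (abs_nonneg x).trans hx
  have hx2 : x ^ 2 ≤ ρ ^ 2 := sq_le_sq' (abs_le.1 hx).1 (abs_le.1 hx).2
  refine ⟨⟨x, √(ρ ^ 2 - x ^ 2)⟩, ?_, rfl⟩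
  rw [Complex.norm_def, Complex.normSq_mk, mul_self_sqrt (by linarith),
    show x * x + (ρ ^ 2 - x ^ 2) = ρ ^ 2 by ring, sqrt_sq hρ]

theorem X_sub_C_mul_X_sub_C_conj_s18 (z : ℂ) :
    (X - C z) * (X - C (starRingEnd ℂ z)) =
      (X ^ 2 - C (2 * z.re) * X + C (‖z‖ ^ 2)).map Complex.ofRealHom := by
  have hsum := Complex.add_conj z
  have hprod : z * starRingEnd ℂ z = ((‖z‖ ^ 2 : ℝ) : ℂ) := by
    rw [Complex.mul_conj, Complex.normSq_eq_norm_sq]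
  simp only [Polynomial.map_add, Polynomial.map_sub, Polynomial.map_mul, Polynomial.map_pow, map_X,
    map_C, Complex.ofRealHom_eq_coe]
  rw [← hsum, ← hprod, C_add, C_mul]
  ring

theorem isWeil_iff (q g : ℕ) (h : ℤ[X]) :
    IsWeil q g h ↔ ∃ b : Fin g → ℝ, (∀ i, |b i| ≤ 2 * √q) ∧
      h.map (Int.castRingHom ℝ) = ∏ i, (X ^ 2 - C (b i) * X + C (q : ℝ)) := by
  have hmap : h.map (Int.castRingHom ℂ) = (h.map (Int.castRingHom ℝ)).map Complex.ofRealHom := by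
    rw [Polynomial.map_map]
    congr 1
  have hprod (w : Fin g → ℂ) (hw : ∀ i, ‖w i‖ = √q) :
      ∏ i, ((X - C (w i)) * (X - C (starRingEnd ℂ (w i)))) =
        (∏ i, (X ^ 2 - C (2 * (w i).re) * X + C (q : ℝ))).map Complex.ofRealHom := by
    rw [Polynomial.map_prod]
    refine Finset.prod_congr rfl fun i _ => ?_
    rw [X_sub_C_mul_X_sub_C_conj_s18, hw i, sq_sqrt q.cast_nonneg]
  have hinj := Polynomial.map_injective Complex.ofRealHom Complex.ofReal_injective
  constructor
  · rintro ⟨w, hw, heq⟩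
    refine ⟨fun i => 2 * (w i).re, fun i => ?_, hinj ?_⟩
    · rw [abs_mul, abs_two, ← hw i]
      gcongr
      exact Complex.abs_re_le_norm _
    · rw [← hmap, heq, hprod w hw]
  · rintro ⟨b, hb, heq⟩
    have hhalf (i : Fin g) : |b i / 2| ≤ √q := by
      rw [abs_div, abs_two]
      linarith [hb i]
    choose w hw hre using fun i => Complex.exists_norm_eq_and_re_eq (hhalf i)
    refine ⟨w, hw, ?_⟩
    rw [hmap, heq, hprod w hw]
    simp only [hre, mul_div_cancel₀ (b _) two_ne_zero]

theorem quadratic_mul_quadratic_mul_quadratic_eq_iff {R : Type*} [CommRing R]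
    (t a₁ a₂ a₃ b₁ b₂ b₃ : R) :
    (X ^ 2 - C b₁ * X + C t) * (X ^ 2 - C b₂ * X + C t) * (X ^ 2 - C b₃ * X + C t) =
        X ^ 6 + C a₁ * X ^ 5 + C a₂ * X ^ 4 + C a₃ * X ^ 3 + C (a₂ * t) * X ^ 2 +
          C (a₁ * t ^ 2) * X + C (t ^ 3) ↔
      b₁ + b₂ + b₃ = -a₁ ∧ b₁ * b₂ + b₁ * b₃ + b₂ * b₃ = a₂ - 3 * t ∧
        b₁ * b₂ * b₃ = 2 * t * a₁ - a₃ := by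
  set e₁ := b₁ + b₂ + b₃
  set e₂ := b₁ * b₂ + b₁ * b₃ + b₂ * b₃
  set e₃ := b₁ * b₂ * b₃
  have hexpand : (X ^ 2 - C b₁ * X + C t) * (X ^ 2 - C b₂ * X + C t) * (X ^ 2 - C b₃ * X + C t) =
      X ^ 6 + C (-e₁) * X ^ 5 + C (e₂ + 3 * t) * X ^ 4 + C (-(e₃ + 2 * t * e₁)) * X ^ 3 +
        C (t * e₂ + 3 * t ^ 2) * X ^ 2 + C (-(t ^ 2 * e₁)) * X + C (t ^ 3) := by
    simp only [e₁, e₂, e₃, map_add, map_mul, map_neg, map_pow, map_ofNat]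
    ring
  rw [hexpand]
  constructor
  · intro h
    have h₅ := congrArg (coeff · 5) h
    have h₄ := congrArg (coeff · 4) h
    have h₃ := congrArg (coeff · 3) h
    simp only [coeff_add, coeff_C_mul, coeff_X_pow, coeff_X, coeff_C] at h₅ h₄ h₃
    norm_num at h₅ h₄ h₃
    exact ⟨by linear_combination -h₅, by linear_combination h₄,
      by linear_combination -h₃ + 2 * t * h₅⟩
  · rintro ⟨h₁, h₂, h₃⟩
    rw [h₁, h₂, h₃]
    ring_nf

theorem isWeil_three_iff (q : ℕ) (a₁ a₂ a₃ : ℤ) :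
    IsWeil q 3 (X ^ 6 + C a₁ * X ^ 5 + C a₂ * X ^ 4 + C a₃ * X ^ 3 + C (a₂ * q) * X ^ 2 +
        C (a₁ * q ^ 2) * X + C ((q : ℤ) ^ 3)) ↔
      ∃ b₁ b₂ b₃ : ℝ, |b₁| ≤ 2 * √q ∧ |b₂| ≤ 2 * √q ∧ |b₃| ≤ 2 * √q ∧
        b₁ + b₂ + b₃ = -a₁ ∧ b₁ * b₂ + b₁ * b₃ + b₂ * b₃ = a₂ - 3 * q ∧
        b₁ * b₂ * b₃ = 2 * q * a₁ - a₃ := by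
  have hmap : (X ^ 6 + C a₁ * X ^ 5 + C a₂ * X ^ 4 + C a₃ * X ^ 3 + C (a₂ * q) * X ^ 2 +
        C (a₁ * q ^ 2) * X + C ((q : ℤ) ^ 3)).map (Int.castRingHom ℝ) =
      X ^ 6 + C (a₁ : ℝ) * X ^ 5 + C (a₂ : ℝ) * X ^ 4 + C (a₃ : ℝ) * X ^ 3 +
        C ((a₂ : ℝ) * q) * X ^ 2 + C ((a₁ : ℝ) * (q : ℝ) ^ 2) * X + C ((q : ℝ) ^ 3) := by
    simp
  rw [isWeil_iff, hmap]
  constructor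
  · rintro ⟨b, hb, heq⟩
    rw [Fin.prod_univ_three, eq_comm, quadratic_mul_quadratic_mul_quadratic_eq_iff] at heq
    exact ⟨b 0, b 1, b 2, hb 0, hb 1, hb 2, heq⟩
  · rintro ⟨b₁, b₂, b₃, h₁, h₂, h₃, he⟩
    refine ⟨![b₁, b₂, b₃], fun i => by fin_cases i <;> assumption, ?_⟩
    rw [Fin.prod_univ_three, eq_comm]
    exact (quadratic_mul_quadratic_mul_quadratic_eq_iff _ _ _ _ _ _ _).2 he

theorem stmt18_general (q : ℕ) (a1 a2 a3 : ℤ) :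
    IsWeil q 3
      (X ^ 6 + C a1 * X ^ 5 + C a2 * X ^ 4 + C a3 * X ^ 3 +
        C (a2 * q) * X ^ 2 + C (a1 * q ^ 2) * X + C ((q : ℤ) ^ 3)) ↔
      (|(a1 : ℝ)| ≤ 6 * Real.sqrt q ∧
        4 * Real.sqrt q * |(a1 : ℝ)| - 9 * q ≤ (a2 : ℝ) ∧
        (a2 : ℝ) ≤ (a1 : ℝ) ^ 2 / 3 + 3 * q ∧
        (-(2 / 27) * (a1 : ℝ) ^ 3 + (1 / 3) * a1 * a2 + q * a1 -
            (2 / 27) * (Real.sqrt ((a1 : ℝ) ^ 2 - 3 * a2 + 9 * q)) ^ 3 ≤ (a3 : ℝ) ∧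
          (a3 : ℝ) ≤ -(2 / 27) * (a1 : ℝ) ^ 3 + (1 / 3) * a1 * a2 + q * a1 +
            (2 / 27) * (Real.sqrt ((a1 : ℝ) ^ 2 - 3 * a2 + 9 * q)) ^ 3) ∧
        (-2 * q * (a1 : ℝ) - 2 * Real.sqrt q * a2 - 2 * q * Real.sqrt q ≤ (a3 : ℝ) ∧
          (a3 : ℝ) ≤ -2 * q * (a1 : ℝ) + 2 * Real.sqrt q * a2 + 2 * q * Real.sqrt q)) := by
  rw [isWeil_three_iff, exists_esymm_eq_and_abs_le_iff, abs_neg,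
    show (-(a1 : ℝ)) ^ 2 - 3 * (a2 - 3 * q) = a1 ^ 2 - 3 * a2 + 9 * q by ring]
  set s := √(q : ℝ)
  have hs : s ^ 2 = q := sq_sqrt q.cast_nonneg
  rw [← hs]
  constructor
  · rintro ⟨⟨hc, hd⟩, ha, hb, he⟩
    rw [abs_le] at hd he
    exact ⟨by linarith, by linarith, by linarith, ⟨by linarith, by linarith⟩,
      by linarith, by linarith⟩
  · rintro ⟨ha, hb, hc, ⟨hd, hd'⟩, he, he'⟩
    exact ⟨⟨by linarith, abs_le.2 ⟨by linarith, by linarith⟩⟩, by linarith, by linarith,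
      abs_le.2 ⟨by linarith, by linarith⟩⟩

theorem stmt18 (q : ℕ) (hq : 0 < q) (a1 a2 a3 : ℤ) :
    IsWeil q 3
      (X ^ 6 + C a1 * X ^ 5 + C a2 * X ^ 4 + C a3 * X ^ 3 +
        C (a2 * q) * X ^ 2 + C (a1 * q ^ 2) * X + C ((q : ℤ) ^ 3)) ↔
      (|(a1 : ℝ)| ≤ 6 * Real.sqrt q ∧
        4 * Real.sqrt q * |(a1 : ℝ)| - 9 * q ≤ (a2 : ℝ) ∧
        (a2 : ℝ) ≤ (a1 : ℝ) ^ 2 / 3 + 3 * q ∧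
        (-(2 / 27) * (a1 : ℝ) ^ 3 + (1 / 3) * a1 * a2 + q * a1 -
            (2 / 27) * (Real.sqrt ((a1 : ℝ) ^ 2 - 3 * a2 + 9 * q)) ^ 3 ≤ (a3 : ℝ) ∧
          (a3 : ℝ) ≤ -(2 / 27) * (a1 : ℝ) ^ 3 + (1 / 3) * a1 * a2 + q * a1 +
            (2 / 27) * (Real.sqrt ((a1 : ℝ) ^ 2 - 3 * a2 + 9 * q)) ^ 3) ∧
        (-2 * q * (a1 : ℝ) - 2 * Real.sqrt q * a2 - 2 * q * Real.sqrt q ≤ (a3 : ℝ) ∧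
          (a3 : ℝ) ≤ -2 * q * (a1 : ℝ) + 2 * Real.sqrt q * a2 + 2 * q * Real.sqrt q)) :=
  stmt18_general q a1 a2 a3
end
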